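/- arXiv:2504.18218 — 3 statements merged into one kernel-verified Lean document; each statement's English description precedes it below -/
import Mathlib

section
/- Let G be a graph with a contraction sequence (G = G_1, ..., G_n) of width d and let k be a natural number. Let i in [2, n], let v be the unique vertex of V(G_i) \ V(G_{i-1}), let u_1, u_2 be the two vertices of V(G_{i-1}) \ V(G_i) contracted into v, let π = (T, D, M, f) be an extended i-profile with v in T, let T' = (T \ {v}) ∪ {u_1, u_2}, and let f': T' → {0, ..., k} be a function compatible with π. Then there exists an f'-decomposition of π with cardinality at most d + 2. -/
attribute [local instance 10] Classical.propDecidable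

/-- A trigraph: a finite simple graph whose edges are partitioned into black and red edges. -/
structure Trigraph (α : Type) where
  verts : Finset α
  black : α → α → Prop
  red : α → α → Prop
  black_symm : ∀ x y, black x y → black y x
  red_symm : ∀ x y, red x y → red y x
  black_irrefl : ∀ x, ¬ black x x
  red_irrefl : ∀ x, ¬ red x x
  black_red_disjoint : ∀ x y, black x y → ¬ red x y
  black_mem : ∀ x y, black x y → x ∈ verts ∧ y ∈ verts
  red_mem : ∀ x y, red x y → x ∈ verts ∧ y ∈ verts

namespace Trigraph

/-- The red graph of a trigraph. -/
def redGraph {α : Type} (G : Trigraph α) : SimpleGraph α where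
  Adj := G.red
  symm := ⟨fun x y h => G.red_symm x y h⟩
  loopless := ⟨fun x h => G.red_irrefl x h⟩

/-- The red degree of a vertex. -/
noncomputable def redDegree {α : Type} (G : Trigraph α) (x : α) : ℕ :=
  Set.ncard {y | G.red x y}

end Trigraph

variable {α : Type} [DecidableEq α]

/-- `Contracts G G' u v w` : the trigraph `G'` is obtained from the trigraph `G` by
contracting the two distinct vertices `u, v` into the new vertex `w`. -/
def Contracts (G G' : Trigraph α) (u v w : α) : Prop :=
  u ∈ G.verts ∧ v ∈ G.verts ∧ u ≠ v ∧ w ∉ G.verts ∧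
  G'.verts = insert w (G.verts \ {u, v}) ∧
  (∀ x ∈ G.verts \ {u, v}, (G'.black w x ↔ G.black u x ∧ G.black v x)) ∧
  (∀ x ∈ G.verts \ {u, v},
    (G'.red w x ↔ (¬ (G.black u x ∧ G.black v x)) ∧
      (G.black u x ∨ G.red u x ∨ G.black v x ∨ G.red v x))) ∧
  (∀ x, x ∈ G.verts \ {u, v} → ∀ y, y ∈ G.verts \ {u, v} →
    ((G'.black x y ↔ G.black x y) ∧ (G'.red x y ↔ G.red x y)))

/-- A contraction sequence `(G = G₁, …, Gₙ)` of a graph `G` (a trigraph with no red edges),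
together with the data of the contracted vertices `cu i, cv i` and the new vertex `cw i`
at each step `i ∈ [2, n]`. -/
structure ContractionSeq (α : Type) [DecidableEq α] (n : ℕ) where
  seq : ℕ → Trigraph α
  cu : ℕ → α
  cv : ℕ → α
  cw : ℕ → α
  one_le : 1 ≤ n
  init_noRed : ∀ x y, ¬ (seq 1).red x y
  last_single : (seq n).verts.card = 1
  step : ∀ i, 2 ≤ i → i ≤ n → Contracts (seq (i - 1)) (seq i) (cu i) (cv i) (cw i)

namespace ContractionSeq

variable {n : ℕ}

/-- The contraction sequence has width `d`: every vertex of every trigraph in the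
sequence has red degree at most `d`. -/
def HasWidth (C : ContractionSeq α n) (d : ℕ) : Prop :=
  ∀ i, 1 ≤ i → i ≤ n → ∀ x, (C.seq i).redDegree x ≤ d

/-- The bag `β(u)` of a vertex `u` of `Gᵢ`: the set of vertices of `G = G₁`
contracted into `u`. -/
def bag (C : ContractionSeq α n) : ℕ → α → Finset α
  | 0, x => {x}
  | 1, x => {x}
  | i + 2, x =>
    if x = C.cw (i + 2) then bag C (i + 1) (C.cu (i + 2)) ∪ bag C (i + 1) (C.cv (i + 2))
    else bag C (i + 1) x

/-- `β(T)`, the union of the bags of the vertices in `T`. -/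
def bags (C : ContractionSeq α n) (i : ℕ) (T : Finset α) : Finset α :=
  T.biUnion (C.bag i)

end ContractionSeq

variable {n : ℕ}

/-- A basic `i`-profile `(T, D)`. -/
def IsBasicProfile (C : ContractionSeq α n) (k d i : ℕ) (T D : Finset α) : Prop :=
  T ⊆ (C.seq i).verts ∧ T.card ≤ k * (d + 1) ∧
  (SimpleGraph.induce (↑T : Set α) (C.seq i).redGraph).Connected ∧
  D ⊆ T ∧ D.card ≤ k

/-- `T' = (T \ {v}) ∪ {u₁, u₂}` where `v = cw i` is the new vertex of `Gᵢ` and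
`u₁ = cu i`, `u₂ = cv i` are the vertices contracted into it. -/
def newT (C : ContractionSeq α n) (i : ℕ) (T : Finset α) : Finset α :=
  T.erase (C.cw i) ∪ {C.cu i, C.cv i}

/-- `D' ⊆ T'` is compatible with the basic `i`-profile `(T, D)`. -/
def DCompat (C : ContractionSeq α n) (k i : ℕ) (T D D' : Finset α) : Prop :=
  D' ⊆ newT C i T ∧
  D.erase (C.cw i) = (D'.erase (C.cu i)).erase (C.cv i) ∧
  D'.card ≤ k ∧
  (C.cw i ∈ D ↔ (C.cu i ∈ D' ∨ C.cv i ∈ D'))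

/-- A `D'`-decomposition `{(T₁, D₁), …, (Tₘ, Dₘ)}` of the basic `i`-profile `(T, D)`. -/
def IsDDecomp (C : ContractionSeq α n) (k d i : ℕ) (T D D' : Finset α)
    (m : ℕ) (Tj Dj : Fin m → Finset α) : Prop :=
  (∀ j, IsBasicProfile C k d (i - 1) (Tj j) (Dj j)) ∧
  (∀ j ℓ, j ≠ ℓ → Disjoint (Tj j) (Tj ℓ)) ∧
  newT C i T = Finset.univ.biUnion Tj ∧
  D' = Finset.univ.biUnion Dj ∧
  DCompat C k i T D D' ∧
  (∀ j ℓ, j ≠ ℓ → ∀ x ∈ Tj j, ∀ y ∈ Dj ℓ, ¬ (C.seq (i - 1)).red x y)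

/-- An extended `i`-profile `(T, D, M, f)`; the function `f : T → [0, k]` is modelled as a
function `f : α → ℕ` vanishing outside `T`. -/
def IsExtProfile (C : ContractionSeq α n) (k d i : ℕ) (T D M : Finset α) (f : α → ℕ) : Prop :=
  IsBasicProfile C k d i T D ∧ M ⊆ T ∧
  (∀ u, u ∉ T → f u = 0) ∧
  (∀ u ∈ T, f u ≤ k) ∧
  (∑ u ∈ T, f u) ≤ k ∧
  (∀ u ∈ T, f u ≤ (C.bag i u).card) ∧
  D = T.filter (fun u => f u ≠ 0)

/-- A solution of an extended `i`-profile `(T, D, M, f)`. -/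
def IsSolution (C : ContractionSeq α n) (i : ℕ) (T : Finset α) (f : α → ℕ)
    (S : Finset α) : Prop :=
  S ⊆ C.bags i T ∧ ∀ u ∈ T, f u = (S ∩ C.bag i u).card

/-- The closed neighborhood `N[S]` of `S` in the graph `G = G₁`. -/
def closedNbhd (C : ContractionSeq α n) (S : Finset α) : Set α :=
  ↑S ∪ {x | ∃ y ∈ S, (C.seq 1).black x y}

/-- The dominating-set-value `|N[S] ∩ β(M)|` of a solution `S`. -/
noncomputable def dsValue (C : ContractionSeq α n) (i : ℕ) (M S : Finset α) : ℕ :=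
  Set.ncard (closedNbhd C S ∩ ↑(C.bags i M))

/-- The vertex-cover-value of a solution `S`: the number of edges of `G` with one
endpoint in `S` and the other endpoint in `β(T)`. -/
noncomputable def vcValue (C : ContractionSeq α n) (i : ℕ) (T S : Finset α) : ℕ :=
  Set.ncard {e : Sym2 α | ∃ x y, e = s(x, y) ∧ (C.seq 1).black x y ∧ x ∈ S ∧ y ∈ C.bags i T}

/-- The function `f' : T' → [0, k]` is compatible with the extended `i`-profile
`(T, D, M, f)`. -/
def FCompat (C : ContractionSeq α n) (k i : ℕ) (T : Finset α) (f f' : α → ℕ) : Prop :=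
  (∀ u, u ∉ newT C i T → f' u = 0) ∧
  (∀ u ∈ newT C i T, f' u ≤ k) ∧
  f (C.cw i) = f' (C.cu i) + f' (C.cv i) ∧
  f' (C.cu i) ≤ (C.bag (i - 1) (C.cu i)).card ∧
  f' (C.cv i) ≤ (C.bag (i - 1) (C.cv i)).card ∧
  (∀ u ∈ T.erase (C.cw i), f' u = f u)

/-- `D' = {u ∈ T' : f'(u) ≠ 0}`. -/
def Dset (C : ContractionSeq α n) (i : ℕ) (T : Finset α) (f' : α → ℕ) : Finset α :=
  (newT C i T).filter (fun u => f' u ≠ 0)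

/-- `M-hat = (M \ {v}) ∪ {u₁, u₂}` if `v ∈ M`, and `M-hat = M` otherwise. -/
def Mhat (C : ContractionSeq α n) (i : ℕ) (M : Finset α) : Finset α :=
  if C.cw i ∈ M then M.erase (C.cw i) ∪ {C.cu i, C.cv i} else M

/-- `M' = {u ∈ M-hat : u has no black neighbor in D' in G_{i-1}}`. -/
noncomputable def Mset (C : ContractionSeq α n) (i : ℕ) (M D' : Finset α) : Finset α :=
  (Mhat C i M).filter (fun u => ¬ ∃ w ∈ D', (C.seq (i - 1)).black u w)

/-- An `f'`-decomposition `{(Tⱼ, Dⱼ, Mⱼ, fⱼ) : j ∈ [m]}` of the extended `i`-profile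
`(T, D, M, f)`. -/
def IsFDecomp (C : ContractionSeq α n) (k d i : ℕ) (T D M : Finset α) (f' : α → ℕ)
    (m : ℕ) (Tj Dj Mj : Fin m → Finset α) (fj : Fin m → α → ℕ) : Prop :=
  (∀ j, IsExtProfile C k d (i - 1) (Tj j) (Dj j) (Mj j) (fj j)) ∧
  (∀ j, ∀ u ∈ Tj j, fj j u = f' u) ∧
  Dset C i T f' = Finset.univ.biUnion Dj ∧
  Mset C i M (Dset C i T f') = Finset.univ.biUnion Mj ∧
  IsDDecomp C k d i T D (Dset C i T f') m Tj Dj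

/-- The adjacency relation of the expanded graph `G_π` of a virtual profile with
context `T`, virtual vertices `Vv` and virtual edges `E`. -/
def expAdj (C : ContractionSeq α n) (i : ℕ) (T Vv : Finset α) (E : Finset (Sym2 α))
    (x y : α) : Prop :=
  (x ∈ C.bags i T ∧ y ∈ C.bags i T ∧ (C.seq 1).black x y) ∨
  (x ∈ Vv ∧ y ∈ Vv ∧ s(x, y) ∈ E) ∨
  (y ∈ Vv ∧ ∃ u ∈ T, x ∈ C.bag i u ∧ s(u, y) ∈ E) ∨
  (x ∈ Vv ∧ ∃ u ∈ T, y ∈ C.bag i u ∧ s(u, x) ∈ E)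

/-- A virtual `i`-profile `(T, D, V, E, f, H)`.  The graph `H` is given by its labeling
`h : [k] → V(H)` (so `V(H)` is the range of `h`) and its edge set `HE`. -/
def IsVirtualProfile (C : ContractionSeq α n) (k d i : ℕ)
    (T D Vv : Finset α) (E : Finset (Sym2 α)) (f h : Fin k → α)
    (HE : Finset (Sym2 α)) : Prop :=
  IsBasicProfile C k d i T D ∧
  Vv.card ≤ k ∧
  (∀ x ∈ Vv, ∀ j, 1 ≤ j → j ≤ n → x ∉ (C.seq j).verts) ∧
  (∀ e ∈ E, ∃ u w, e = s(u, w) ∧ u ∈ Vv ∪ T ∧ w ∈ Vv) ∧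
  (∀ a, f a ∈ D ∪ Vv) ∧
  (∀ x ∈ D ∪ Vv, ∃ a, f a = x) ∧
  (∀ u ∈ D, (Finset.univ.filter (fun a => f a = u)).card ≤ (C.bag i u).card) ∧
  (∀ e ∈ HE, ¬ e.IsDiag ∧ ∀ x ∈ e, ∃ a, h a = x)

/-- A solution `(s₁, …, s_k)` of a virtual `i`-profile. -/
def IsVSolution (C : ContractionSeq α n) (i k : ℕ)
    (T D Vv : Finset α) (E : Finset (Sym2 α)) (f h : Fin k → α) (HE : Finset (Sym2 α))
    (sol : Fin k → α) : Prop :=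
  (∀ a, (f a ∈ Vv → sol a = f a) ∧ (f a ∈ D → sol a ∈ C.bag i (f a))) ∧
  (∀ a b, sol a = sol b ↔ h a = h b) ∧
  (∀ a b, expAdj C i T Vv E (sol a) (sol b) ↔ s(h a, h b) ∈ HE)

/-- Quantifier-free first-order formulas in the language of graphs with free variables
`x₁, …, x_k, y` (the variable `y` being the last one). -/
inductive QF (k : ℕ) : Type where
  | eq : Fin (k + 1) → Fin (k + 1) → QF k
  | adj : Fin (k + 1) → Fin (k + 1) → QF k
  | not : QF k → QF k
  | and : QF k → QF k → QF k
  | or : QF k → QF k → QF k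

/-- Satisfaction of a quantifier-free formula under an adjacency relation `A` and a
valuation `val` of the variables. -/
def QF.Sat {β : Type} {k : ℕ} (A : β → β → Prop) (val : Fin (k + 1) → β) : QF k → Prop
  | .eq a b => val a = val b
  | .adj a b => A (val a) (val b)
  | .not φ => ¬ QF.Sat A val φ
  | .and φ ψ => QF.Sat A val φ ∧ QF.Sat A val ψ
  | .or φ ψ => QF.Sat A val φ ∨ QF.Sat A val ψ

/-- The value `Σ_{α ∈ I} |{u ∈ β(T) : G_π ⊨ ψ_α(s₁, …, s_k, u)}|` of a solution of a
virtual `i`-profile. -/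
noncomputable def vValue {I : Type} [Fintype I] {k : ℕ} (ψ : I → QF k)
    (C : ContractionSeq α n) (i : ℕ) (T Vv : Finset α) (E : Finset (Sym2 α))
    (sol : Fin k → α) : ℕ :=
  ∑ a : I, Set.ncard {u : α | u ∈ C.bags i T ∧
    QF.Sat (expAdj C i T Vv E) (Fin.snoc sol u) (ψ a)}

/-- The function `f' : [k] → T' ∪ V` is compatible with the virtual `i`-profile. -/
def VFCompat (C : ContractionSeq α n) (i k : ℕ) (f f' : Fin k → α) : Prop :=
  ∀ a, (f a = C.cw i → (f' a = C.cu i ∨ f' a = C.cv i)) ∧ (f a ≠ C.cw i → f' a = f a)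

/-- `E' = {uw ∈ E : u, w ∈ T' ∪ V} ∪ {u₁w, u₂w : vw ∈ E}`. -/
def Eprime (C : ContractionSeq α n) (i : ℕ) (T Vv : Finset α) (E : Finset (Sym2 α)) :
    Set (Sym2 α) :=
  {e | e ∈ E ∧ ∀ x ∈ e, x ∈ newT C i T ∪ Vv} ∪
  {e | ∃ w, s(C.cw i, w) ∈ E ∧ (e = s(C.cu i, w) ∨ e = s(C.cv i, w))}

/-- `D' = range(f') ∩ T'`. -/
noncomputable def rangeD {k : ℕ} (C : ContractionSeq α n) (i : ℕ) (T : Finset α)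
    (f' : Fin k → α) : Finset α :=
  (newT C i T).filter (fun u => ∃ a, f' a = u)

/-- An `f'`-decomposition `{(Tⱼ, Dⱼ, Vⱼ, Eⱼ, fⱼ, H) : j ∈ [m]}` of the virtual
`i`-profile `(T, D, V, E, f, H)`. -/
def IsVDecomp (C : ContractionSeq α n) (k d i : ℕ)
    (T D Vv : Finset α) (E : Finset (Sym2 α)) (f h : Fin k → α) (HE : Finset (Sym2 α))
    (f' : Fin k → α) (m : ℕ) (Tj Dj Vj : Fin m → Finset α)
    (Ej : Fin m → Finset (Sym2 α)) (fj : Fin m → Fin k → α) : Prop :=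
  IsDDecomp C k d i T D (rangeD C i T f') m Tj Dj ∧
  (∀ j, IsVirtualProfile C k d (i - 1) (Tj j) (Dj j) (Vj j) (Ej j) (fj j) h HE) ∧
  (∀ j, Vj j =
    Vv ∪ (Finset.univ.filter (fun a => f' a ∈ rangeD C i T f' \ Dj j)).image h) ∧
  (∀ j a, (f' a ∈ Dj j ∪ Vv → fj j a = f' a) ∧
          (f' a ∈ rangeD C i T f' \ Dj j → fj j a = h a)) ∧
  (∀ j e, e ∈ Ej j ↔
    ((e ∈ Eprime C i T Vv E ∧ ∀ x ∈ e, x ∈ Vv ∪ Tj j) ∨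
     (∃ u a, e = s(u, h a) ∧ u ∈ Vv ∪ Tj j ∧ f' a ∈ rangeD C i T f' \ Dj j ∧
        (s(u, f' a) ∈ Eprime C i T Vv E ∨ (C.seq (i - 1)).black u (f' a))) ∨
     (∃ a b, e = s(h a, h b) ∧ s(h a, h b) ∈ HE ∧
        f' a ∈ rangeD C i T f' \ Dj j ∧ f' b ∈ rangeD C i T f' \ Dj j)))

/-- `⊕_{j ∈ [m]} sⱼ = s¹ ⊕ (s² ⊕ ( … ))`, where the `a`-th entry of `s¹ ⊕ s²` is
`s¹ a` if `f₁ a ∈ D₁` and `s² a` otherwise. -/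
noncomputable def bigOplus {k : ℕ} [Nonempty α] :
    (m : ℕ) → (Fin m → Fin k → α) → (Fin m → Fin k → α) → (Fin m → Finset α) →
      Fin k → α
  | 0, _, _, _ => fun _ => Classical.arbitrary α
  | 1, sol, _, _ => sol 0
  | m + 2, sol, f, D => fun a =>
      if f 0 a ∈ D 0 then sol 0 a
      else bigOplus (m + 1) (fun j => sol j.succ) (fun j => f j.succ)
        (fun j => D j.succ) a

/-! Write `T' = (T \ {v}) ∪ {u₁, u₂}`, so `|T'| = |T| + 1 ≤ k(d + 1) + 1`, and partition `T'`
along the red graph of `G_{i-1}`. If `T'` is red-disconnected or has at most `k(d + 1)` vertices,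
take its red components: `T` is red-connected through `v` and the red edges inside `T \ {v}`
survive the uncontraction, so every component contains `u₁`, `u₂` or one of the at most `d` red
neighbours of `v`. Otherwise `T'` is red-connected with exactly `k(d + 1) + 1` vertices, while the
closed red neighbourhood of `D'` has at most `|D'|(d + 1) ≤ k(d + 1)`; so some `x ∉ D'` has no red
neighbour in `D'`, and `{x}` together with the red components of `T' \ {x}`, each containing one
of the at most `d` red neighbours of `x`, will do. In both cases no red edge joins a part to a
vertex of `D'` in another part, and restricting `f'` and `M'` to the parts gives the
decomposition. -/

open Finset

theorem Finset.card_filter_ne_zero_le_sum {ι : Type*} (s : Finset ι) (f : ι → ℕ) :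
    #{u ∈ s | f u ≠ 0} ≤ ∑ u ∈ s, f u :=
  calc #{u ∈ s | f u ≠ 0} = ∑ _u ∈ s with f _u ≠ 0, 1 := card_eq_sum_ones _
    _ ≤ ∑ u ∈ s with f u ≠ 0, f u :=
        sum_le_sum fun _u hu => Nat.one_le_iff_ne_zero.2 (mem_filter.1 hu).2
    _ ≤ ∑ u ∈ s, f u := sum_le_sum_of_subset (filter_subset _ _)

theorem Finpartition.univ_biUnion_equivFin_symm {ι : Type*} [DecidableEq ι] {s : Finset ι}
    (Q : Finpartition s) :
    univ.biUnion (fun j => (Q.parts.equivFin.symm j : Finset ι)) = s := by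
  ext x
  simp only [mem_biUnion, mem_univ, true_and]
  constructor
  · rintro ⟨j, hx⟩
    exact Q.le (Q.parts.equivFin.symm j).2 hx
  · intro hx
    obtain ⟨p, hp, hxp⟩ := Q.exists_mem hx
    exact ⟨Q.parts.equivFin ⟨p, hp⟩, by simpa using hxp⟩

/-- The parts `T₁, …, Tₘ` of a `D`-decomposition, for `b = k (d + 1)`. -/
def Finpartition.IsAdmissible {V : Type*} [DecidableEq V] (G : SimpleGraph V) (b : ℕ)
    (D : Finset V) {s : Finset V} (Q : Finpartition s) : Prop :=
  (∀ p ∈ Q.parts, (G.induce ↑p).Connected ∧ #p ≤ b) ∧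
  ∀ p ∈ Q.parts, ∀ q ∈ Q.parts, p ≠ q → ∀ x ∈ p, ∀ y ∈ q, y ∈ D → ¬ G.Adj x y

namespace SimpleGraph

variable {V : Type*} (G : SimpleGraph V)

theorem spanningCoe_induce_adj {s : Set V} {x y : V} :
    (G.induce s).spanningCoe.Adj x y ↔ x ∈ s ∧ y ∈ s ∧ G.Adj x y := by
  simp only [map_adj, comap_adj, Function.Embedding.subtype_apply, Subtype.exists]
  constructor
  · rintro ⟨a, ha, b, hb, h, rfl, rfl⟩
    exact ⟨ha, hb, h⟩
  · rintro ⟨ha, hb, h⟩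
    exact ⟨x, ha, y, hb, h, rfl, rfl⟩

theorem spanningCoe_induce_mono {s t : Set V} (h : s ⊆ t) :
    (G.induce s).spanningCoe ≤ (G.induce t).spanningCoe := fun x y hxy => by
  rw [spanningCoe_induce_adj] at hxy ⊢
  exact ⟨h hxy.1, h hxy.2.1, hxy.2.2⟩

theorem induce_spanningCoe_induce_of_subset {s t : Set V} (h : t ⊆ s) :
    (G.induce s).spanningCoe.induce t = G.induce t := by
  ext ⟨x, hx⟩ ⟨y, hy⟩
  simp only [comap_adj, Function.Embedding.subtype_apply, spanningCoe_induce_adj]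
  exact ⟨fun h => h.2.2, fun hxy => ⟨h hx, h hy, hxy⟩⟩

theorem mem_of_reachable_spanningCoe_induce {s : Set V} {x y : V}
    (h : (G.induce s).spanningCoe.Reachable x y) (hx : x ∈ s) : y ∈ s := by
  obtain ⟨p⟩ := h
  induction p with
  | nil => exact hx
  | cons h _ ih => exact ih ((G.spanningCoe_induce_adj).1 h).2.1

variable [DecidableEq V]

theorem exists_adj_reachable_erase {s : Finset V} (hs : (G.induce ↑s).Connected)
    {x z : V} (hx : x ∈ s) (hz : z ∈ s) (hxz : x ≠ z) :
    ∃ y ∈ s.erase z, G.Adj y z ∧ (G.induce ↑(s.erase z)).spanningCoe.Reachable x y := by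
  obtain ⟨p⟩ : (G.induce ↑s).spanningCoe.Reachable x z :=
    (hs.preconnected ⟨x, hx⟩ ⟨z, hz⟩).map (Embedding.spanningCoe _).toHom
  clear hx
  induction p with
  | nil => exact absurd rfl hxz
  | @cons x b z hxb _ ih =>
    obtain ⟨hx, hb, hxb⟩ := G.spanningCoe_induce_adj.1 hxb
    have hx' : x ∈ s.erase z := mem_erase.2 ⟨hxz, hx⟩
    by_cases hbz : b = z
    · subst hbz
      exact ⟨x, hx', hxb, .rfl⟩
    · obtain ⟨y, hy, hyz, hby⟩ := ih hz hbz
      have hb' : b ∈ s.erase z := mem_erase.2 ⟨hbz, hb⟩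
      exact ⟨y, hy, hyz, (G.spanningCoe_induce_adj.2 ⟨hx', hb', hxb⟩).reachable.trans hby⟩

/-- `(G.induce s).spanningCoe` is `G[s]` seen as a graph on `V`: its reachability classes meeting
`s` are the vertex sets of the components of `G[s]`. -/
noncomputable def componentFinpartition (s : Finset V) : Finpartition s :=
  Finpartition.ofSetSetoid (G.induce ↑s).spanningCoe.reachableSetoid s

section

variable {G} {s : Finset V}

theorem mem_componentFinpartition_parts {p : Finset V} :
    p ∈ (G.componentFinpartition s).parts ↔
      ∃ a ∈ s, {b ∈ s | (G.induce ↑s).spanningCoe.Reachable a b} = p :=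
  mem_image

theorem connected_induce_of_mem_componentFinpartition {p : Finset V}
    (hp : p ∈ (G.componentFinpartition s).parts) : (G.induce ↑p).Connected := by
  obtain ⟨a, ha, rfl⟩ := mem_componentFinpartition_parts.1 hp
  set H := (G.induce ↑s).spanningCoe
  have hsupp : (↑{b ∈ s | H.Reachable a b} : Set V) = (H.connectedComponentMk a).supp := by
    ext b
    simp only [coe_filter, Set.mem_ofPred_eq, ConnectedComponent.mem_supp_iff,
      ConnectedComponent.eq]
    exact ⟨fun h => h.2.symm, fun h => ⟨G.mem_of_reachable_spanningCoe_induce h.symm ha, h.symm⟩⟩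
  have hsub : (H.connectedComponentMk a).supp ⊆ ↑s := hsupp ▸ coe_subset.2 (filter_subset _ _)
  rw [hsupp, ← G.induce_spanningCoe_induce_of_subset hsub]
  exact (H.connectedComponentMk a).connected_toSimpleGraph

theorem not_adj_of_mem_componentFinpartition {p q : Finset V}
    (hp : p ∈ (G.componentFinpartition s).parts) (hq : q ∈ (G.componentFinpartition s).parts)
    (hpq : p ≠ q) {x y : V} (hx : x ∈ p) (hy : y ∈ q) : ¬ G.Adj x y := by
  intro hxy
  obtain ⟨a, -, rfl⟩ := mem_componentFinpartition_parts.1 hp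
  rw [mem_filter] at hx
  have hys : y ∈ s := (G.componentFinpartition s).le hq hy
  have hyp : y ∈ {b ∈ s | (G.induce ↑s).spanningCoe.Reachable a b} :=
    mem_filter.2 ⟨hys, hx.2.trans (G.spanningCoe_induce_adj.2 ⟨hx.1, hys, hxy⟩).reachable⟩
  exact hpq ((G.componentFinpartition s).eq_of_mem_parts hp hq hyp hy)

theorem card_componentFinpartition_parts_le {N : Finset V}
    (hN : ∀ x ∈ s, ∃ y ∈ N, (G.induce ↑s).spanningCoe.Reachable x y) :
    #(G.componentFinpartition s).parts ≤ #N := by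
  refine card_le_card_of_surjOn
    (fun a => {b ∈ s | (G.induce ↑s).spanningCoe.Reachable a b}) ?_
  intro p hp
  obtain ⟨x, hx, rfl⟩ := mem_componentFinpartition_parts.1 hp
  obtain ⟨y, hy, hxy⟩ := hN x hx
  exact ⟨y, hy, filter_congr fun b _ => ⟨hxy.trans, hxy.symm.trans⟩⟩

end

theorem isAdmissible_componentFinpartition {s : Finset V} {b : ℕ} (D : Finset V)
    (hs : #s ≤ b + 1) (hconn : (G.induce ↑s).Connected → #s ≤ b) :
    (G.componentFinpartition s).IsAdmissible G b D := by
  refine ⟨fun p hp => ⟨connected_induce_of_mem_componentFinpartition hp, ?_⟩,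
    fun p hp q hq hpq x hx y hy _ => not_adj_of_mem_componentFinpartition hp hq hpq hx hy⟩
  rcases ((G.componentFinpartition s).le hp).eq_or_ssubset with rfl | hlt
  · exact hconn (connected_induce_of_mem_componentFinpartition hp)
  · have := card_lt_card hlt
    omega

theorem exists_notMem_forall_not_adj {s D : Finset V} {d : ℕ}
    (hdeg : ∀ y ∈ D, #{x ∈ s | G.Adj y x} ≤ d) (hD : #D * (d + 1) < #s) :
    ∃ x ∈ s, x ∉ D ∧ ∀ y ∈ D, ¬ G.Adj x y := by
  by_contra! h
  have hsub : s ⊆ D.biUnion fun y => insert y {x ∈ s | G.Adj y x} := by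
    intro x hx
    by_cases hxD : x ∈ D
    · exact mem_biUnion.2 ⟨x, hxD, mem_insert_self _ _⟩
    · obtain ⟨y, hy, hxy⟩ := h x hx hxD
      exact mem_biUnion.2 ⟨y, hy, mem_insert_of_mem (mem_filter.2 ⟨hx, hxy.symm⟩)⟩
  have : #s ≤ #D * (d + 1) :=
    calc #s ≤ #(D.biUnion fun y => insert y {x ∈ s | G.Adj y x}) := card_le_card hsub
      _ ≤ ∑ y ∈ D, #(insert y {x ∈ s | G.Adj y x}) := card_biUnion_le
      _ ≤ ∑ _y ∈ D, (d + 1) :=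
          sum_le_sum fun y hy => (card_insert_le _ _).trans (Nat.succ_le_succ (hdeg y hy))
      _ = #D * (d + 1) := by rw [sum_const, smul_eq_mul]
  omega

/-- Split off a vertex `z` that is neither in `D` nor adjacent to it: `{z}` together with the
components of `s \ {z}`, each of which contains a neighbour of `z`. -/
theorem exists_isAdmissible_of_connected {s D : Finset V} {k d : ℕ}
    (hs : (G.induce ↑s).Connected) (hcard : #s = k * (d + 1) + 1) (hk : 0 < k)
    (hD : #D ≤ k) (hdeg : ∀ y, #{x ∈ s | G.Adj y x} ≤ d) :
    ∃ Q : Finpartition s, Q.IsAdmissible G (k * (d + 1)) D ∧ #Q.parts ≤ d + 1 := by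
  obtain ⟨z, hz, hzD, hz_not_adj⟩ :=
    G.exists_notMem_forall_not_adj (D := D) (fun y _ => hdeg y)
      (by rw [hcard]; exact Nat.lt_succ_of_le (Nat.mul_le_mul_right _ hD))
  have hcard' : #(s.erase z) = k * (d + 1) := by rw [card_erase_of_mem hz]; omega
  set Q₀ := G.componentFinpartition (s.erase z)
  have hQ₀ : Q₀.IsAdmissible G (k * (d + 1)) D :=
    G.isAdmissible_componentFinpartition D (by omega) fun _ => hcard'.le
  have hcover : ∀ x ∈ s.erase z, ∃ y ∈ {x ∈ s.erase z | G.Adj z x},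
      (G.induce ↑(s.erase z)).spanningCoe.Reachable x y := by
    intro x hx
    obtain ⟨y, hy, hyz, hxy⟩ := G.exists_adj_reachable_erase hs (mem_of_mem_erase hx) hz
      (ne_of_mem_erase hx)
    exact ⟨y, mem_filter.2 ⟨hy, hyz.symm⟩, hxy⟩
  have hQ₀card : #Q₀.parts ≤ d :=
    calc #Q₀.parts ≤ #{x ∈ s.erase z | G.Adj z x} := card_componentFinpartition_parts_le hcover
      _ ≤ #{x ∈ s | G.Adj z x} := card_le_card (filter_subset_filter _ (erase_subset z s))
      _ ≤ d := hdeg z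
  refine ⟨Q₀.extend (b := {z}) (singleton_ne_empty z)
    (disjoint_singleton_right.2 (notMem_erase z s)) (by simp [hz]), ⟨?_, ?_⟩,
    by rw [Q₀.card_extend]; omega⟩
  · intro p hp
    rw [Finpartition.extend_parts] at hp
    rcases mem_insert.1 hp with rfl | hp
    · rw [coe_singleton, card_singleton]
      exact ⟨Connected.of_subsingleton, Nat.one_le_iff_ne_zero.2 (by positivity)⟩
    · exact hQ₀.1 p hp
  · intro p hp q hq hpq x hx y hy hyD
    rw [Finpartition.extend_parts] at hp hq
    rcases mem_insert.1 hq with rfl | hq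
    · exact absurd (mem_singleton.1 hy ▸ hyD) hzD
    rcases mem_insert.1 hp with rfl | hp
    · exact mem_singleton.1 hx ▸ hz_not_adj y hyD
    · exact hQ₀.2 p hp q hq hpq x hx y hy hyD

end SimpleGraph

theorem Trigraph.card_filter_red_le {β : Type} (G : Trigraph β) {x : β} {d : ℕ}
    (hx : G.redDegree x ≤ d) (s : Finset β) : #{y ∈ s | G.red x y} ≤ d := by
  have hfin : {y | G.red x y}.Finite :=
    G.verts.finite_toSet.subset fun y hy => (G.red_mem x y hy).2
  calc #{y ∈ s | G.red x y} = (↑{y ∈ s | G.red x y} : Set β).ncard :=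
        (Set.ncard_coe_finset _).symm
    _ ≤ {y | G.red x y}.ncard := Set.ncard_le_ncard (fun y hy => (mem_filter.1 hy).2) hfin
    _ ≤ d := hx

namespace Contracts

variable {G G' : Trigraph α} {u v w : α}

theorem left_notMem (h : Contracts G G' u v w) : u ∉ G'.verts := by
  obtain ⟨hu, -, -, hw, hverts, -⟩ := h
  rw [hverts, mem_insert, mem_sdiff]
  rintro (rfl | ⟨-, hu'⟩)
  · exact hw hu
  · exact hu' (by simp)

theorem right_notMem (h : Contracts G G' u v w) : v ∉ G'.verts := by
  obtain ⟨-, hv, -, hw, hverts, -⟩ := h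
  rw [hverts, mem_insert, mem_sdiff]
  rintro (rfl | ⟨-, hv'⟩)
  · exact hw hv
  · exact hv' (by simp)

theorem mem_sdiff_of_mem_of_ne (h : Contracts G G' u v w) {x : α} (hx : x ∈ G'.verts)
    (hxw : x ≠ w) : x ∈ G.verts \ {u, v} := by
  rw [h.2.2.2.2.1] at hx
  exact (mem_insert.1 hx).resolve_left hxw

theorem red_iff (h : Contracts G G' u v w) {x y : α} (hx : x ∈ G.verts \ {u, v})
    (hy : y ∈ G.verts \ {u, v}) : G'.red x y ↔ G.red x y :=
  (h.2.2.2.2.2.2.2 x hx y hy).2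

end Contracts

theorem ContractionSeq.bag_eq_bag_pred (C : ContractionSeq α n) {i : ℕ} (h2 : 2 ≤ i) {x : α}
    (hx : x ≠ C.cw i) : C.bag i x = C.bag (i - 1) x := by
  obtain ⟨j, rfl⟩ : ∃ j, i = j + 2 := ⟨i - 2, by omega⟩
  simp [ContractionSeq.bag, hx]

section ContractionStep

variable {C : ContractionSeq α n} {i k d : ℕ} {T D M : Finset α} {f f' : α → ℕ}

theorem mem_newT {x : α} :
    x ∈ newT C i T ↔ x ∈ T.erase (C.cw i) ∨ x = C.cu i ∨ x = C.cv i := by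
  rw [newT, mem_union, mem_insert, mem_singleton]

theorem cu_notMem (h2 : 2 ≤ i) (hin : i ≤ n) (hT : T ⊆ (C.seq i).verts) : C.cu i ∉ T :=
  fun h => (C.step i h2 hin).left_notMem (hT h)

theorem cv_notMem (h2 : 2 ≤ i) (hin : i ≤ n) (hT : T ⊆ (C.seq i).verts) : C.cv i ∉ T :=
  fun h => (C.step i h2 hin).right_notMem (hT h)

theorem mem_sdiff_of_mem_erase_cw (h2 : 2 ≤ i) (hin : i ≤ n) (hT : T ⊆ (C.seq i).verts)
    {x : α} (hx : x ∈ T.erase (C.cw i)) : x ∈ (C.seq (i - 1)).verts \ {C.cu i, C.cv i} :=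
  (C.step i h2 hin).mem_sdiff_of_mem_of_ne (hT (mem_of_mem_erase hx)) (ne_of_mem_erase hx)

theorem newT_subset_verts (h2 : 2 ≤ i) (hin : i ≤ n) (hT : T ⊆ (C.seq i).verts) :
    newT C i T ⊆ (C.seq (i - 1)).verts := by
  intro x hx
  rcases mem_newT.1 hx with hx | rfl | rfl
  · exact (mem_sdiff.1 (mem_sdiff_of_mem_erase_cw h2 hin hT hx)).1
  · exact (C.step i h2 hin).1
  · exact (C.step i h2 hin).2.1

theorem disjoint_erase_cw_pair (h2 : 2 ≤ i) (hin : i ≤ n) (hT : T ⊆ (C.seq i).verts) :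
    Disjoint (T.erase (C.cw i)) {C.cu i, C.cv i} := by
  simp only [disjoint_insert_right, disjoint_singleton_right, mem_erase, not_and]
  exact ⟨fun _ h => cu_notMem h2 hin hT h, fun _ h => cv_notMem h2 hin hT h⟩

theorem card_newT (h2 : 2 ≤ i) (hin : i ≤ n) (hT : T ⊆ (C.seq i).verts) (hv : C.cw i ∈ T) :
    #(newT C i T) = #T + 1 := by
  rw [newT, card_union_of_disjoint (disjoint_erase_cw_pair h2 hin hT), card_erase_of_mem hv,
    card_pair (C.step i h2 hin).2.2.1]
  have := card_pos.2 ⟨_, hv⟩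
  omega

theorem induce_redGraph_erase_cw (h2 : 2 ≤ i) (hin : i ≤ n) (hT : T ⊆ (C.seq i).verts) :
    (C.seq i).redGraph.induce ↑(T.erase (C.cw i)) =
      (C.seq (i - 1)).redGraph.induce ↑(T.erase (C.cw i)) := by
  ext ⟨x, hx⟩ ⟨y, hy⟩
  exact (C.step i h2 hin).red_iff (mem_sdiff_of_mem_erase_cw h2 hin hT hx)
    (mem_sdiff_of_mem_erase_cw h2 hin hT hy)

theorem Mhat_subset_newT (hM : M ⊆ T) : Mhat C i M ⊆ newT C i T := by
  unfold Mhat newT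
  split_ifs with hvM
  · exact union_subset_union (erase_subset_erase _ hM) subset_rfl
  · exact fun x hx => mem_union_left _ (mem_erase.2 ⟨fun h => hvM (h ▸ hx), hM hx⟩)

theorem exists_cover_newT (h2 : 2 ≤ i) (hin : i ≤ n) (hW : C.HasWidth d)
    (hT : T ⊆ (C.seq i).verts) (hconn : ((C.seq i).redGraph.induce ↑T).Connected)
    (hv : C.cw i ∈ T) :
    ∃ N : Finset α, #N ≤ d + 2 ∧ ∀ x ∈ newT C i T, ∃ y ∈ N,
      ((C.seq (i - 1)).redGraph.induce ↑(newT C i T)).spanningCoe.Reachable x y := by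
  refine ⟨insert (C.cu i) (insert (C.cv i) {y ∈ newT C i T | (C.seq i).red (C.cw i) y}),
    ?_, fun x hx => ?_⟩
  · have := (C.seq i).card_filter_red_le (hW i (by omega) hin (C.cw i)) (newT C i T)
    exact (card_insert_le _ _).trans (Nat.succ_le_succ ((card_insert_le _ _).trans
      (Nat.succ_le_succ this)))
  rcases mem_newT.1 hx with hx | rfl | rfl
  · obtain ⟨y, hy, hyv, hxy⟩ := (C.seq i).redGraph.exists_adj_reachable_erase hconn
      (mem_of_mem_erase hx) hv (ne_of_mem_erase hx)
    rw [induce_redGraph_erase_cw h2 hin hT] at hxy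
    refine ⟨y, mem_insert_of_mem (mem_insert_of_mem (mem_filter.2
      ⟨mem_newT.2 (Or.inl hy), (C.seq i).red_symm _ _ hyv⟩)), hxy.mono ?_⟩
    exact SimpleGraph.spanningCoe_induce_mono _ (coe_subset.2 subset_union_left)
  · exact ⟨C.cu i, mem_insert_self _ _, .rfl⟩
  · exact ⟨C.cv i, mem_insert_of_mem (mem_insert_self _ _), .rfl⟩

theorem sum_newT (h2 : 2 ≤ i) (hin : i ≤ n) (hT : T ⊆ (C.seq i).verts) (hv : C.cw i ∈ T)
    (hf' : FCompat C k i T f f') : ∑ u ∈ newT C i T, f' u = ∑ u ∈ T, f u := by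
  rw [newT, sum_union (disjoint_erase_cw_pair h2 hin hT), sum_pair (C.step i h2 hin).2.2.1,
    sum_congr rfl hf'.2.2.2.2.2, ← hf'.2.2.1, sum_erase_add T f hv]

theorem sum_newT_le (h2 : 2 ≤ i) (hin : i ≤ n) (hπ : IsExtProfile C k d i T D M f)
    (hv : C.cw i ∈ T) (hf' : FCompat C k i T f f') : ∑ u ∈ newT C i T, f' u ≤ k :=
  (sum_newT h2 hin hπ.1.1 hv hf').trans_le hπ.2.2.2.2.1

theorem card_Dset_le (h2 : 2 ≤ i) (hin : i ≤ n) (hπ : IsExtProfile C k d i T D M f)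
    (hv : C.cw i ∈ T) (hf' : FCompat C k i T f f') : #(Dset C i T f') ≤ k :=
  (card_filter_ne_zero_le_sum _ _).trans (sum_newT_le h2 hin hπ hv hf')

theorem FCompat.le_card_bag (hf' : FCompat C k i T f f') (h2 : 2 ≤ i)
    (hπ : IsExtProfile C k d i T D M f) {u : α} (hu : u ∈ newT C i T) :
    f' u ≤ #(C.bag (i - 1) u) := by
  rcases mem_newT.1 hu with hu | rfl | rfl
  · rw [hf'.2.2.2.2.2 u hu, ← C.bag_eq_bag_pred h2 (ne_of_mem_erase hu)]
    exact hπ.2.2.2.2.2.1 u (mem_of_mem_erase hu)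
  · exact hf'.2.2.2.1
  · exact hf'.2.2.2.2.1

theorem dCompat_Dset (h2 : 2 ≤ i) (hin : i ≤ n) (hπ : IsExtProfile C k d i T D M f)
    (hv : C.cw i ∈ T) (hf' : FCompat C k i T f f') : DCompat C k i T D (Dset C i T f') := by
  refine ⟨filter_subset _ _, ?_, card_Dset_le h2 hin hπ hv hf', ?_⟩
  all_goals obtain ⟨⟨hT, -⟩, -, -, -, -, -, rfl⟩ := hπ
  · ext x
    simp only [Dset, mem_erase, mem_filter, mem_newT]
    constructor
    · rintro ⟨hxv, hxT, hfx⟩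
      exact ⟨fun h => cv_notMem h2 hin hT (h ▸ hxT), fun h => cu_notMem h2 hin hT (h ▸ hxT),
        Or.inl ⟨hxv, hxT⟩, hf'.2.2.2.2.2 x (mem_erase.2 ⟨hxv, hxT⟩) ▸ hfx⟩
    · rintro ⟨hxu₂, hxu₁, ⟨hxv, hxT⟩ | rfl | rfl, hfx⟩
      · exact ⟨hxv, hxT, hf'.2.2.2.2.2 x (mem_erase.2 ⟨hxv, hxT⟩) ▸ hfx⟩
      · exact absurd rfl hxu₁
      · exact absurd rfl hxu₂
  · have hu₁ : C.cu i ∈ newT C i T := mem_newT.2 (Or.inr (Or.inl rfl))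
    have hu₂ : C.cv i ∈ newT C i T := mem_newT.2 (Or.inr (Or.inr rfl))
    simp only [Dset, mem_filter, hv, hu₁, hu₂, true_and, hf'.2.2.1]
    omega

theorem isExtProfile_indicator (h2 : 2 ≤ i) (hin : i ≤ n) (hπ : IsExtProfile C k d i T D M f)
    (hv : C.cw i ∈ T) (hf' : FCompat C k i T f f') {p : Finset α} (hp : p ⊆ newT C i T)
    (hconn : ((C.seq (i - 1)).redGraph.induce ↑p).Connected) (hcard : #p ≤ k * (d + 1)) :
    IsExtProfile C k d (i - 1) p (p ∩ Dset C i T f') (p ∩ Mset C i M (Dset C i T f'))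
      ((↑p : Set α).indicator f') := by
  have hind : ∀ u ∈ p, (↑p : Set α).indicator f' u = f' u :=
    fun u hu => Set.indicator_of_mem (mem_coe.2 hu) _
  refine ⟨⟨hp.trans (newT_subset_verts h2 hin hπ.1.1), hcard, hconn, inter_subset_left,
      (card_le_card inter_subset_right).trans (card_Dset_le h2 hin hπ hv hf')⟩,
    inter_subset_left, fun u hu => Set.indicator_of_notMem hu _,
    fun u hu => hind u hu ▸ hf'.2.1 u (hp hu), ?_,
    fun u hu => hind u hu ▸ hf'.le_card_bag h2 hπ (hp hu), ?_⟩
  · calc ∑ u ∈ p, (↑p : Set α).indicator f' u = ∑ u ∈ p, f' u := sum_congr rfl hind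
      _ ≤ ∑ u ∈ newT C i T, f' u := sum_le_sum_of_subset hp
      _ ≤ k := sum_newT_le h2 hin hπ hv hf'
  · ext u
    simp only [Dset, mem_inter, mem_filter]
    exact ⟨fun h => ⟨h.1, hind u h.1 ▸ h.2.2⟩, fun h => ⟨h.1, hp h.1, hind u h.1 ▸ h.2⟩⟩

theorem exists_isFDecomp_of_isAdmissible (h2 : 2 ≤ i) (hin : i ≤ n)
    (hπ : IsExtProfile C k d i T D M f) (hv : C.cw i ∈ T) (hf' : FCompat C k i T f f')
    {Q : Finpartition (newT C i T)}
    (hQ : Q.IsAdmissible (C.seq (i - 1)).redGraph (k * (d + 1)) (Dset C i T f')) :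
    ∃ (Tj Dj Mj : Fin #Q.parts → Finset α) (fj : Fin #Q.parts → α → ℕ),
      IsFDecomp C k d i T D M f' #Q.parts Tj Dj Mj fj := by
  set P : Fin #Q.parts → Finset α := fun j => Q.parts.equivFin.symm j
  have hPQ : ∀ j, P j ∈ Q.parts := fun j => (Q.parts.equivFin.symm j).2
  have hPinj : Function.Injective P :=
    Subtype.val_injective.comp Q.parts.equivFin.symm.injective
  have hunion : univ.biUnion P = newT C i T := Q.univ_biUnion_equivFin_symm
  have hsplit : ∀ A ⊆ newT C i T, A = univ.biUnion fun j => P j ∩ A := fun A hA => by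
    rw [← biUnion_inter, hunion, inter_eq_right.2 hA]
  have hext : ∀ j, IsExtProfile C k d (i - 1) (P j) (P j ∩ Dset C i T f')
      (P j ∩ Mset C i M (Dset C i T f')) ((↑(P j) : Set α).indicator f') := fun j =>
    isExtProfile_indicator h2 hin hπ hv hf' (Q.le (hPQ j)) (hQ.1 _ (hPQ j)).1 (hQ.1 _ (hPQ j)).2
  have hD' := hsplit (Dset C i T f') (filter_subset _ _)
  have hM' := hsplit (Mset C i M (Dset C i T f'))
    ((filter_subset _ _).trans (Mhat_subset_newT hπ.2.1))
  exact ⟨P, fun j => P j ∩ Dset C i T f', fun j => P j ∩ Mset C i M (Dset C i T f'),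
    fun j => (↑(P j) : Set α).indicator f', hext,
    fun j u hu => Set.indicator_of_mem (mem_coe.2 hu) _, hD', hM', fun j => (hext j).1,
    fun j l hjl => Q.disjoint (hPQ j) (hPQ l) (hPinj.ne hjl), hunion.symm, hD',
    dCompat_Dset h2 hin hπ hv hf',
    fun j l hjl x hx y hy => hQ.2 _ (hPQ j) _ (hPQ l) (hPinj.ne hjl) x hx y
      (mem_inter.1 hy).1 (mem_inter.1 hy).2⟩

end ContractionStep

/-- (Lemma 6.) For every extended `i`-profile `π = (T, D, M, f)`
containing the new vertex `v = cw i` and every `f' : T' → [0, k]` compatible with `π`,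
there is an `f'`-decomposition of `π` of cardinality at most `d + 2`. -/
theorem extended_decomposition_exists {α : Type} [DecidableEq α] {n : ℕ}
    (C : ContractionSeq α n) (d k : ℕ) (hW : C.HasWidth d)
    (i : ℕ) (h2 : 2 ≤ i) (hin : i ≤ n)
    (T D M : Finset α) (f : α → ℕ) (hπ : IsExtProfile C k d i T D M f)
    (hv : C.cw i ∈ T)
    (f' : α → ℕ) (hf' : FCompat C k i T f f') :
    ∃ (m : ℕ) (Tj Dj Mj : Fin m → Finset α) (fj : Fin m → α → ℕ),
      IsFDecomp C k d i T D M f' m Tj Dj Mj fj ∧ m ≤ d + 2 := by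
  set R := (C.seq (i - 1)).redGraph
  suffices ∃ Q : Finpartition (newT C i T),
      Q.IsAdmissible R (k * (d + 1)) (Dset C i T f') ∧ #Q.parts ≤ d + 2 by
    obtain ⟨Q, hQ, hQcard⟩ := this
    obtain ⟨Tj, Dj, Mj, fj, hdec⟩ := exists_isFDecomp_of_isAdmissible h2 hin hπ hv hf' hQ
    exact ⟨_, Tj, Dj, Mj, fj, hdec, hQcard⟩
  have hcard := card_newT h2 hin hπ.1.1 hv
  have hTcard : #T ≤ k * (d + 1) := hπ.1.2.1
  by_cases hbig : (R.induce ↑(newT C i T)).Connected ∧ k * (d + 1) < #(newT C i T)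
  · have hk : 0 < k := Nat.pos_of_ne_zero fun hk => by
      simp only [hk, zero_mul, nonpos_iff_eq_zero, card_eq_zero] at hTcard
      exact notMem_empty _ (hTcard ▸ hv)
    obtain ⟨Q, hQ, hQcard⟩ := R.exists_isAdmissible_of_connected hbig.1 (by omega) hk
      (card_Dset_le h2 hin hπ hv hf')
      fun y => (C.seq (i - 1)).card_filter_red_le (hW (i - 1) (by omega) (by omega) y) _
    exact ⟨Q, hQ, by omega⟩
  · obtain ⟨N, hN, hcover⟩ := exists_cover_newT h2 hin hW hπ.1.1 hπ.1.2.2.1 hv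
    exact ⟨_, R.isAdmissible_componentFinpartition _ (by omega)
      (fun hconn => not_lt.1 fun hlt => hbig ⟨hconn, hlt⟩),
      (SimpleGraph.card_componentFinpartition_parts_le hcover).trans hN⟩
end

section
/- Let G be a graph with a contraction sequence (G = G_1, ..., G_n) of width d and let k be a natural number. Let i in [2, n], let π = (T, D, M, f) be an extended i-profile with v in T (where v is the new vertex of G_i), let S be a solution of π, and define f': T' → {0, ..., k} by f'(u) = |S ∩ beta(u)|. Then f' is compatible with π, and for every f'-decomposition {(T_j, D_j, M_j, f_j) : j in [m]} of π and every j in [m], the set S ∩ beta(T_j) is a solution of (T_j, D_j, M_j, f_j). -/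
attribute [local instance 10] Classical.propDecidable

variable {α : Type} [DecidableEq α]

variable {n : ℕ}

/-!
Bags of distinct vertices of a trigraph in the sequence are disjoint, and the bag of the new
vertex `v` of `Gᵢ` is the union of the bags of `u₁, u₂`. Hence `|S ∩ β(v)|` splits as
`f'(u₁) + f'(u₂)`, while every other bag is unchanged from `Gᵢ` to `Gᵢ₋₁`; the parts
`S ∩ β(Tⱼ)` then count correctly because each `β(u)` with `u ∈ Tⱼ` lies inside `β(Tⱼ)`.
-/

namespace ContractionSeq

variable (C : ContractionSeq α n)

lemma bag_cw {i : ℕ} (hi : 2 ≤ i) :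
    C.bag i (C.cw i) = C.bag (i - 1) (C.cu i) ∪ C.bag (i - 1) (C.cv i) := by
  obtain ⟨m, rfl⟩ : ∃ m, i = m + 2 := ⟨i - 2, by omega⟩
  simp [bag]

lemma bag_of_ne_cw {i : ℕ} (hi : 2 ≤ i) {x : α} (hx : x ≠ C.cw i) :
    C.bag i x = C.bag (i - 1) x := by
  obtain ⟨m, rfl⟩ : ∃ m, i = m + 2 := ⟨i - 2, by omega⟩
  simp [bag, hx]

lemma disjoint_bag {j : ℕ} (hj : j ≤ n) {x y : α} (hx : x ∈ (C.seq j).verts)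
    (hy : y ∈ (C.seq j).verts) (hxy : x ≠ y) : Disjoint (C.bag j x) (C.bag j y) := by
  induction j generalizing x y with
  | zero => simpa [bag] using hxy
  | succ m ih =>
    rcases Nat.eq_zero_or_pos m with rfl | hm
    · simpa [bag] using hxy
    obtain ⟨hu, hv, -, hw, hverts, -⟩ := C.step (m + 1) (by omega) hj
    have ih' := @ih (by omega)
    simp only [add_tsub_cancel_right] at hu hv hw
    rw [hverts, Finset.mem_insert, Finset.mem_sdiff, Finset.mem_insert,
      Finset.mem_singleton] at hx hy
    have bag_old : ∀ {z}, z ∈ (C.seq m).verts → C.bag (m + 1) z = C.bag m z := fun hz =>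
      C.bag_of_ne_cw (by omega) (by rintro rfl; exact hw hz)
    rcases hx with rfl | ⟨hxV, hxuv⟩ <;> rcases hy with rfl | ⟨hyV, hyuv⟩
    · exact absurd rfl hxy
    · rw [C.bag_cw (by omega), bag_old hyV, Finset.disjoint_union_left]
      exact ⟨ih' hu hyV (by tauto), ih' hv hyV (by tauto)⟩
    · rw [C.bag_cw (by omega), bag_old hxV, Finset.disjoint_union_right]
      exact ⟨ih' hxV hu (by tauto), ih' hxV hv (by tauto)⟩
    · rw [bag_old hxV, bag_old hyV]
      exact ih' hxV hyV hxy

lemma card_inter_bag_cw (S : Finset α) {i : ℕ} (h2 : 2 ≤ i) (hin : i ≤ n) :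
    (S ∩ C.bag i (C.cw i)).card =
      (S ∩ C.bag (i - 1) (C.cu i)).card + (S ∩ C.bag (i - 1) (C.cv i)).card := by
  obtain ⟨hu, hv, huv, -⟩ := C.step i h2 hin
  rw [C.bag_cw h2, Finset.inter_union_distrib_left, Finset.card_union_of_disjoint]
  exact (C.disjoint_bag (by omega) hu hv huv).mono Finset.inter_subset_right
    Finset.inter_subset_right

end ContractionSeq

lemma isSolution_inter_bags {C : ContractionSeq α n} {i : ℕ} {T : Finset α} {f : α → ℕ}
    {S : Finset α} (hf : ∀ u ∈ T, f u = (S ∩ C.bag i u).card) :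
    IsSolution C i T f (S ∩ C.bags i T) := by
  refine ⟨Finset.inter_subset_right, fun u hu => ?_⟩
  have hsub : C.bag i u ⊆ C.bags i T := Finset.subset_biUnion_of_mem _ hu
  rw [hf u hu, Finset.inter_assoc, Finset.inter_eq_right.2 hsub]

lemma fCompat_of_isSolution {C : ContractionSeq α n} {k i : ℕ} (h2 : 2 ≤ i) (hin : i ≤ n)
    {T : Finset α} {f f' : α → ℕ} {S : Finset α} (hfk : ∀ u ∈ T, f u ≤ k)
    (hv : C.cw i ∈ T) (hS : IsSolution C i T f S)
    (hf' : ∀ u, f' u = if u ∈ newT C i T then (S ∩ C.bag (i - 1) u).card else 0) :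
    FCompat C k i T f f' := by
  have hf'_cu : f' (C.cu i) = (S ∩ C.bag (i - 1) (C.cu i)).card := by simp [hf', newT]
  have hf'_cv : f' (C.cv i) = (S ∩ C.bag (i - 1) (C.cv i)).card := by simp [hf', newT]
  have hf_cw : f (C.cw i) = f' (C.cu i) + f' (C.cv i) := by
    rw [hS.2 _ hv, C.card_inter_bag_cw S h2 hin, hf'_cu, hf'_cv]
  have hf'_old : ∀ u ∈ T.erase (C.cw i), f' u = f u := fun u hu => by
    rw [hf', if_pos (show u ∈ newT C i T from Finset.mem_union_left _ hu), hS.2 u (Finset.mem_of_mem_erase hu),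
      C.bag_of_ne_cw h2 (Finset.ne_of_mem_erase hu)]
  have hf_cw_le : f' (C.cu i) + f' (C.cv i) ≤ k := hf_cw ▸ hfk _ hv
  refine ⟨fun u hu => by rw [hf', if_neg hu], fun u hu => ?_, hf_cw,
    hf'_cu ▸ Finset.card_le_card Finset.inter_subset_right,
    hf'_cv ▸ Finset.card_le_card Finset.inter_subset_right, hf'_old⟩
  rcases Finset.mem_union.1 hu with hu | hu
  · exact hf'_old u hu ▸ hfk u (Finset.mem_of_mem_erase hu)
  · rcases Finset.mem_insert.1 hu with rfl | hu
    · omega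
    · rw [Finset.mem_singleton.1 hu]; omega

theorem solution_restricts_general {α : Type} [DecidableEq α] {n : ℕ}
    (C : ContractionSeq α n) (d k : ℕ)
    (i : ℕ) (h2 : 2 ≤ i) (hin : i ≤ n)
    (T D M : Finset α) (f : α → ℕ) (hπ : IsExtProfile C k d i T D M f)
    (hv : C.cw i ∈ T)
    (S : Finset α) (hS : IsSolution C i T f S)
    (f' : α → ℕ)
    (hf'def : ∀ u, f' u =
      if u ∈ newT C i T then (S ∩ C.bag (i - 1) u).card else 0) :
    FCompat C k i T f f' ∧
    ∀ (m : ℕ) (Tj Dj Mj : Fin m → Finset α) (fj : Fin m → α → ℕ),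
      IsFDecomp C k d i T D M f' m Tj Dj Mj fj →
      ∀ j, IsSolution C (i - 1) (Tj j) (fj j) (S ∩ C.bags (i - 1) (Tj j)) := by
  refine ⟨fCompat_of_isSolution h2 hin hπ.2.2.2.1 hv hS hf'def, ?_⟩
  rintro m Tj Dj Mj fj ⟨-, hfj, -, -, -, -, hT', -⟩ j
  refine isSolution_inter_bags fun u hu => ?_
  have hu' : u ∈ newT C i T := hT' ▸ Finset.mem_biUnion.2 ⟨j, Finset.mem_univ j, hu⟩
  rw [hfj j u hu, hf'def, if_pos hu']

/-- If `S` is a solution of an extended `i`-profile `π` and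
`f'(u) = |S ∩ β(u)|` on `T'` (and `0` elsewhere), then `f'` is compatible with `π`, and
for every `f'`-decomposition of `π` the sets `S ∩ β(Tⱼ)` are solutions of the
corresponding profiles. -/
theorem solution_restricts {α : Type} [DecidableEq α] {n : ℕ}
    (C : ContractionSeq α n) (d k : ℕ) (hW : C.HasWidth d)
    (i : ℕ) (h2 : 2 ≤ i) (hin : i ≤ n)
    (T D M : Finset α) (f : α → ℕ) (hπ : IsExtProfile C k d i T D M f)
    (hv : C.cw i ∈ T)
    (S : Finset α) (hS : IsSolution C i T f S)
    (f' : α → ℕ)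
    (hf'def : ∀ u, f' u =
      if u ∈ newT C i T then (S ∩ C.bag (i - 1) u).card else 0) :
    FCompat C k i T f f' ∧
    ∀ (m : ℕ) (Tj Dj Mj : Fin m → Finset α) (fj : Fin m → α → ℕ),
      IsFDecomp C k d i T D M f' m Tj Dj Mj fj →
      ∀ j, IsSolution C (i - 1) (Tj j) (fj j) (S ∩ C.bags (i - 1) (Tj j)) :=
  solution_restricts_general C d k i h2 hin T D M f hπ hv S hS f' hf'def
end

section
/- Let G be a graph with a contraction sequence (G = G_1, ..., G_n) of width d and let k be a natural number. Let i in [2, n], let π be an extended i-profile with v in T (where v is the new vertex of G_i), let f' be compatible with π, let {(T_j, D_j, M_j, f_j) : j in [m]} be an f'-decomposition of π, and let S be a solution of π satisfying |S ∩ beta(u)| = f'(u) for every u in T'. Then for every j in [m], N[S ∩ beta(T_j)] ∩ beta(M_j) = N[S] ∩ beta(M_j); in particular, the dominating-set-value of S ∩ beta(T_j) in (T_j, D_j, M_j, f_j) equals |N[S] ∩ beta(M_j)|. -/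
attribute [local instance 10] Classical.propDecidable

variable {α : Type} [DecidableEq α]

variable {n : ℕ}

/-! Let `y ∈ S` lie outside `β(Tⱼ)`. As `S ⊆ β(T')`, `y` lies in the bag of some `w ∈ Tℓ`
with `ℓ ≠ j`, and `f'(w) = |S ∩ β(w)| > 0` puts `w` in `Dℓ ⊆ D'`. A vertex `u ∈ Mⱼ ⊆ M'` has no
black neighbour in `D'`, and the decomposition forbids red edges between `Tⱼ` and `Dℓ`, so `u`
and `w` are non-adjacent in `G_{i-1}`. Contractions never delete edges, hence no edge of `G`
joins `β(u)` to `β(w)`: the vertices of `S` outside `β(Tⱼ)` dominate nothing in `β(Mⱼ)`. -/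

namespace Trigraph

variable {β : Type}

def Adj (G : Trigraph β) (x y : β) : Prop := G.black x y ∨ G.red x y

theorem Adj.symm {G : Trigraph β} {x y : β} (h : G.Adj x y) : G.Adj y x :=
  h.imp (G.black_symm x y) (G.red_symm x y)

end Trigraph

def contractImage (u v w x : α) : α := if x = u ∨ x = v then w else x

namespace Contracts

variable {G G' : Trigraph α} {u v w : α}

theorem adj_new_of_adj (hc : Contracts G G' u v w) {y : α} (hy : y ∈ G.verts \ {u, v})
    (h : G.Adj u y ∨ G.Adj v y) : G'.Adj w y := by
  obtain ⟨-, -, -, -, -, hblack, hred, -⟩ := hc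
  by_cases hb : G.black u y ∧ G.black v y
  · exact Or.inl ((hblack y hy).2 hb)
  · exact Or.inr ((hred y hy).2 ⟨hb, by unfold Trigraph.Adj at h; tauto⟩)

theorem adj_contractImage (hc : Contracts G G' u v w) {x y : α} (hx : x ∈ G.verts)
    (hy : y ∈ G.verts) (hne : contractImage u v w x ≠ contractImage u v w y)
    (hxy : G.Adj x y) : G'.Adj (contractImage u v w x) (contractImage u v w y) := by
  unfold contractImage at hne ⊢
  have hmem : ∀ z ∈ G.verts, ¬ (z = u ∨ z = v) → z ∈ G.verts \ {u, v} := fun z hz hzuv => by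
    simpa [hz] using hzuv
  by_cases hxuv : x = u ∨ x = v <;> by_cases hyuv : y = u ∨ y = v <;>
    simp only [hxuv, hyuv, if_true, if_false] at hne ⊢
  · exact absurd rfl hne
  · refine hc.adj_new_of_adj (hmem y hy hyuv) ?_
    rcases hxuv with rfl | rfl <;> simp [hxy]
  · refine (hc.adj_new_of_adj (hmem x hx hxuv) ?_).symm
    rcases hyuv with rfl | rfl <;> simp [hxy.symm]
  · obtain ⟨-, -, -, -, -, -, -, hkeep⟩ := hc
    obtain ⟨hb, hr⟩ := hkeep x (hmem x hx hxuv) y (hmem y hy hyuv)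
    exact hxy.imp hb.2 hr.2

end Contracts

namespace ContractionSeq

variable (C : ContractionSeq α n)

theorem bag_of_two_le {i : ℕ} (h : 2 ≤ i) (x : α) :
    C.bag i x = if x = C.cw i then C.bag (i - 1) (C.cu i) ∪ C.bag (i - 1) (C.cv i)
      else C.bag (i - 1) x := by
  obtain ⟨p, rfl⟩ : ∃ p, i = p + 2 := ⟨i - 2, by omega⟩
  simp [bag]

theorem exists_contractImage_eq_of_mem_bag {i : ℕ} (h2 : 2 ≤ i) (hin : i ≤ n) {x z : α}
    (hx : x ∈ (C.seq i).verts) (hz : z ∈ C.bag i x) :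
    ∃ x₀ ∈ (C.seq (i - 1)).verts, contractImage (C.cu i) (C.cv i) (C.cw i) x₀ = x ∧
      z ∈ C.bag (i - 1) x₀ := by
  obtain ⟨hcu, hcv, -, -, hverts, -⟩ := C.step i h2 hin
  rw [C.bag_of_two_le h2] at hz
  split_ifs at hz with hxw
  · rcases Finset.mem_union.mp hz with hz | hz
    · exact ⟨C.cu i, hcu, by simp [contractImage, hxw], hz⟩
    · exact ⟨C.cv i, hcv, by simp [contractImage, hxw], hz⟩
  · have hx' : x ∈ (C.seq (i - 1)).verts \ {C.cu i, C.cv i} := by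
      simpa [hverts, hxw] using hx
    refine ⟨x, (Finset.mem_sdiff.mp hx').1, ?_, hz⟩
    rw [contractImage, if_neg]
    simpa using (Finset.mem_sdiff.mp hx').2

theorem bags_subset_bags_newT {i : ℕ} (h2 : 2 ≤ i) (T : Finset α) :
    C.bags i T ⊆ C.bags (i - 1) (newT C i T) := by
  intro z hz
  obtain ⟨x, hxT, hzx⟩ := Finset.mem_biUnion.mp hz
  rw [C.bag_of_two_le h2] at hzx
  simp only [bags, newT, Finset.mem_biUnion]
  split_ifs at hzx with hxw
  · rcases Finset.mem_union.mp hzx with hzx | hzx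
    · exact ⟨C.cu i, by simp, hzx⟩
    · exact ⟨C.cv i, by simp, hzx⟩
  · exact ⟨x, by simp [hxT, hxw], hzx⟩

theorem adj_of_black_of_mem_bag {j : ℕ} (h1 : 1 ≤ j) (hjn : j ≤ n) {u w : α}
    (hu : u ∈ (C.seq j).verts) (hw : w ∈ (C.seq j).verts) (huw : u ≠ w) {x y : α}
    (hx : x ∈ C.bag j u) (hy : y ∈ C.bag j w) (hxy : (C.seq 1).black x y) :
    (C.seq j).Adj u w := by
  induction j, h1 using Nat.le_induction generalizing u w with
  | base =>
    simp only [bag, Finset.mem_singleton] at hx hy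
    exact Or.inl (hx ▸ hy ▸ hxy)
  | succ p hp ih =>
    obtain ⟨u₀, hu₀, rfl, hxu₀⟩ := C.exists_contractImage_eq_of_mem_bag (by omega) hjn hu hx
    obtain ⟨w₀, hw₀, rfl, hyw₀⟩ := C.exists_contractImage_eq_of_mem_bag (by omega) hjn hw hy
    have hc : Contracts (C.seq p) (C.seq (p + 1)) _ _ _ := C.step (p + 1) (by omega) hjn
    exact hc.adj_contractImage hu₀ hw₀ huw
      (ih (by omega) hu₀ hw₀ (fun h => huw (congrArg _ h)) hxu₀ hyw₀)

end ContractionSeq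

theorem closedNbhd_inter_eq (C : ContractionSeq α n) {S S' B : Finset α}
    (hS : ∀ x ∈ B, x ∈ S → x ∈ S') (hN : ∀ x ∈ B, ∀ y ∈ S, (C.seq 1).black x y → y ∈ S') :
    closedNbhd C (S ∩ S') ∩ B = closedNbhd C S ∩ B := by
  ext x
  simp only [closedNbhd, Set.mem_inter_iff, Set.mem_union, Finset.mem_coe, Finset.mem_inter]
  constructor
  · rintro ⟨hx | ⟨y, hy, hxy⟩, hxB⟩
    · exact ⟨Or.inl hx.1, hxB⟩
    · exact ⟨Or.inr ⟨y, hy.1, hxy⟩, hxB⟩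
  · rintro ⟨hx | ⟨y, hy, hxy⟩, hxB⟩
    · exact ⟨Or.inl ⟨hx, hS x hxB hx⟩, hxB⟩
    · exact ⟨Or.inr ⟨y, ⟨hy, hN x hxB y hy hxy⟩, hxy⟩, hxB⟩

namespace IsFDecomp

variable {C : ContractionSeq α n} {k d i : ℕ} {T D M : Finset α} {f' : α → ℕ} {m : ℕ}
  {Tj Dj Mj : Fin m → Finset α} {fj : Fin m → α → ℕ}

theorem mem_Dj (hdec : IsFDecomp C k d i T D M f' m Tj Dj Mj fj) {ℓ : Fin m} {w : α}
    (hw : w ∈ Tj ℓ) (hfw : f' w ≠ 0) : w ∈ Dj ℓ := by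
  rw [(hdec.1 ℓ).2.2.2.2.2.2, Finset.mem_filter, hdec.2.1 ℓ w hw]
  exact ⟨hw, hfw⟩

theorem not_adj (hdec : IsFDecomp C k d i T D M f' m Tj Dj Mj fj) {j ℓ : Fin m} (hjℓ : j ≠ ℓ)
    {u w : α} (hu : u ∈ Mj j) (hw : w ∈ Dj ℓ) : ¬ (C.seq (i - 1)).Adj u w := by
  obtain ⟨hext, -, hDset, hMset, hdd⟩ := hdec
  have hu' : u ∈ Mset C i M (Dset C i T f') := hMset ▸ Finset.mem_biUnion.mpr ⟨j, by simp, hu⟩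
  have hw' : w ∈ Dset C i T f' := hDset ▸ Finset.mem_biUnion.mpr ⟨ℓ, by simp, hw⟩
  rintro (hb | hr)
  · exact (Finset.mem_filter.mp hu').2 ⟨w, hw', hb⟩
  · exact hdd.2.2.2.2.2 j ℓ hjℓ u ((hext j).2.1 hu) w hw hr

theorem mem_bags_of_black (hdec : IsFDecomp C k d i T D M f' m Tj Dj Mj fj)
    (h2 : 2 ≤ i) (hin : i ≤ n) {S : Finset α} (hS : S ⊆ C.bags i T)
    (hSf' : ∀ u ∈ newT C i T, (S ∩ C.bag (i - 1) u).card = f' u) {j : Fin m} {x y : α}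
    (hx : x ∈ C.bags (i - 1) (Mj j)) (hy : y ∈ S) (hxy : (C.seq 1).black x y) :
    y ∈ C.bags (i - 1) (Tj j) := by
  obtain ⟨u, huM, hxu⟩ := Finset.mem_biUnion.mp hx
  obtain ⟨w, hwT', hyw⟩ := Finset.mem_biUnion.mp (C.bags_subset_bags_newT h2 T (hS hy))
  obtain ⟨hbasic, hdisj, hTU, -⟩ := hdec.2.2.2.2
  obtain ⟨ℓ, -, hwℓ⟩ := Finset.mem_biUnion.mp (hTU ▸ hwT')
  have huT : u ∈ Tj j := (hdec.1 j).2.1 huM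
  by_cases hjℓ : j = ℓ
  · exact Finset.mem_biUnion.mpr ⟨w, hjℓ ▸ hwℓ, hyw⟩
  exfalso
  have hfw : f' w ≠ 0 := by
    rw [← hSf' w hwT']
    exact Finset.card_ne_zero_of_mem (Finset.mem_inter.mpr ⟨hy, hyw⟩)
  have huw : u ≠ w := fun h => Finset.disjoint_left.mp (hdisj j ℓ hjℓ) huT (h ▸ hwℓ)
  exact hdec.not_adj hjℓ huM (hdec.mem_Dj hwℓ hfw) <|
    C.adj_of_black_of_mem_bag (by omega) (by omega) ((hbasic j).1 huT) ((hbasic ℓ).1 hwℓ)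
      huw hxu hyw hxy

end IsFDecomp

theorem restricted_domination_general {α : Type} [DecidableEq α] {n : ℕ}
    (C : ContractionSeq α n) (d k : ℕ)
    (i : ℕ) (h2 : 2 ≤ i) (hin : i ≤ n)
    (T D M : Finset α) (f : α → ℕ)
    (f' : α → ℕ)
    (m : ℕ) (Tj Dj Mj : Fin m → Finset α) (fj : Fin m → α → ℕ)
    (hdec : IsFDecomp C k d i T D M f' m Tj Dj Mj fj)
    (S : Finset α) (hS : IsSolution C i T f S)
    (hSf' : ∀ u ∈ newT C i T, (S ∩ C.bag (i - 1) u).card = f' u) :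
    ∀ j, closedNbhd C (S ∩ C.bags (i - 1) (Tj j)) ∩ ↑(C.bags (i - 1) (Mj j))
          = closedNbhd C S ∩ ↑(C.bags (i - 1) (Mj j)) ∧
        dsValue C (i - 1) (Mj j) (S ∩ C.bags (i - 1) (Tj j))
          = Set.ncard (closedNbhd C S ∩ ↑(C.bags (i - 1) (Mj j))) := by
  intro j
  have hMT : C.bags (i - 1) (Mj j) ⊆ C.bags (i - 1) (Tj j) :=
    Finset.biUnion_subset_biUnion_of_subset_left _ (hdec.1 j).2.1
  have hdom := closedNbhd_inter_eq C (fun x hx _ => hMT hx)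
    (fun x hx y hy hxy => hdec.mem_bags_of_black h2 hin hS.1 hSf' hx hy hxy)
  exact ⟨hdom, by rw [dsValue, hdom]⟩

/-- (Lemma 8a.) For a solution `S` of `π` distributing according to
`f'`, the restriction `S ∩ β(Tⱼ)` dominates within `β(Mⱼ)` exactly what `S` does:
`N[S ∩ β(Tⱼ)] ∩ β(Mⱼ) = N[S] ∩ β(Mⱼ)`; in particular its dominating-set-value in the
`j`-th profile equals `|N[S] ∩ β(Mⱼ)|`. -/
theorem restricted_domination {α : Type} [DecidableEq α] {n : ℕ}
    (C : ContractionSeq α n) (d k : ℕ) (hW : C.HasWidth d)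
    (i : ℕ) (h2 : 2 ≤ i) (hin : i ≤ n)
    (T D M : Finset α) (f : α → ℕ) (hπ : IsExtProfile C k d i T D M f)
    (hv : C.cw i ∈ T)
    (f' : α → ℕ) (hf' : FCompat C k i T f f')
    (m : ℕ) (Tj Dj Mj : Fin m → Finset α) (fj : Fin m → α → ℕ)
    (hdec : IsFDecomp C k d i T D M f' m Tj Dj Mj fj)
    (S : Finset α) (hS : IsSolution C i T f S)
    (hSf' : ∀ u ∈ newT C i T, (S ∩ C.bag (i - 1) u).card = f' u) :
    ∀ j, closedNbhd C (S ∩ C.bags (i - 1) (Tj j)) ∩ ↑(C.bags (i - 1) (Mj j))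
          = closedNbhd C S ∩ ↑(C.bags (i - 1) (Mj j)) ∧
        dsValue C (i - 1) (Mj j) (S ∩ C.bags (i - 1) (Tj j))
          = Set.ncard (closedNbhd C S ∩ ↑(C.bags (i - 1) (Mj j))) :=
  restricted_domination_general C d k i h2 hin T D M f f' m Tj Dj Mj fj hdec S hS hSf'
end
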